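/- arXiv:1812.05314 — 6 statements merged into one kernel-verified Lean document; each statement's English description precedes it below -/
import Mathlib

section
/- Every finite simple graph that is a leaf extension is randomly internally matchable. -/
open SimpleGraph

namespace SimpleGraph

/-- A matching in `G`, viewed as a set of pairwise disjoint edges of `G`. -/
def IsMatchingSet {V : Type*} (G : SimpleGraph V) (M : Set (Sym2 V)) : Prop :=
  M ⊆ G.edgeSet ∧ ∀ e ∈ M, ∀ f ∈ M, e ≠ f → ∀ v : V, ¬(v ∈ e ∧ v ∈ f)

/-- A matching (set of edges) `M` saturates a vertex `v` if some edge of `M` contains `v`. -/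
def SaturatedBy {V : Type*} (M : Set (Sym2 V)) (v : V) : Prop := ∃ e ∈ M, v ∈ e

/-- A perfect internal matching: a matching of `G` saturating every vertex of degree ≥ 2. -/
def IsPerfectInternalMatching {V : Type*} (G : SimpleGraph V) (M : Set (Sym2 V)) : Prop :=
  G.IsMatchingSet M ∧ ∀ v : V, 2 ≤ (G.neighborSet v).ncard → SaturatedBy M v

/-- A graph is randomly internally matchable if every maximal matching is a
perfect internal matching. -/
def RandomlyInternallyMatchable {V : Type*} (G : SimpleGraph V) : Prop :=
  ∀ M : Set (Sym2 V), Maximal G.IsMatchingSet M → G.IsPerfectInternalMatching M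

/-- A stable (independent) set: pairwise non-adjacent vertices. -/
def IsStableSet {V : Type*} (G : SimpleGraph V) (S : Set V) : Prop :=
  S.Pairwise fun u v => ¬ G.Adj u v

/-- A CIS graph: every maximal clique intersects every maximal stable set. -/
def IsCIS {V : Type*} (G : SimpleGraph V) : Prop :=
  ∀ C S : Set V, Maximal G.IsClique C → Maximal G.IsStableSet S → (C ∩ S).Nonempty

/-- `G` is `H`-free: no induced subgraph of `G` is isomorphic to `H`. -/
def InducedFree {V W : Type*} (G : SimpleGraph V) (H : SimpleGraph W) : Prop :=
  ∀ s : Set V, ¬ Nonempty (H ≃g (G.induce s))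

/-- `G` is a leaf extension with core set `S`: every vertex outside `S` has degree exactly one
with its unique neighbor in `S`, and every vertex of `S` has a neighbor outside `S`. -/
def IsLeafExtension {V : Type*} (G : SimpleGraph V) (S : Set V) : Prop :=
  (∀ v ∉ S, (G.neighborSet v).ncard = 1 ∧ ∀ u : V, G.Adj v u → u ∈ S) ∧
  ∀ s ∈ S, ∃ v ∉ S, G.Adj s v

/-- No two distinct vertices have equal closed neighborhoods. -/
def TrueTwinFree {V : Type*} (G : SimpleGraph V) : Prop :=
  ∀ x y : V, (∀ z : V, (G.Adj x z ∨ x = z) ↔ (G.Adj y z ∨ y = z)) → x = y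

/-- The corona `G ∘ K₁`: for each vertex `v` of `G` add a new pendant vertex adjacent to `v`. -/
def corona {V : Type*} (G : SimpleGraph V) : SimpleGraph (V ⊕ V) :=
  SimpleGraph.fromRel fun a b =>
    match a, b with
    | Sum.inl u, Sum.inl v => G.Adj u v
    | Sum.inl u, Sum.inr v => u = v
    | _, _ => False

/-- The graph obtained from `H` by gluing a new triangle vertex along each edge of `H`. -/
def glueTriangles {V : Type*} (H : SimpleGraph V) : SimpleGraph (V ⊕ H.edgeSet) :=
  SimpleGraph.fromRel fun a b =>
    match a, b with
    | Sum.inl u, Sum.inl v => H.Adj u v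
    | Sum.inl u, Sum.inr e => u ∈ (e : Sym2 V)
    | _, _ => False

/-- The clique number: maximum size of a clique. -/
noncomputable def cliqueNumber {V : Type*} (G : SimpleGraph V) : ℕ :=
  sSup {n | ∃ C : Set V, G.IsClique C ∧ C.ncard = n}

/-- The stability (independence) number: maximum size of a stable set. -/
noncomputable def stabilityNumber {V : Type*} (G : SimpleGraph V) : ℕ :=
  sSup {n | ∃ S : Set V, G.IsStableSet S ∧ S.ncard = n}

/-- The matching number: maximum size of a matching. -/
noncomputable def matchingNumber {V : Type*} (G : SimpleGraph V) : ℕ :=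
  sSup {n | ∃ M : Set (Sym2 V), G.IsMatchingSet M ∧ M.ncard = n}

end SimpleGraph

/-- The claw `K_{1,3}`. -/
def clawGraph : SimpleGraph (Fin 1 ⊕ Fin 3) := completeBipartiteGraph (Fin 1) (Fin 3)

/-- The gem: the path `0-1-2-3` together with the universal vertex `4`. -/
def gemGraph : SimpleGraph (Fin 5) :=
  SimpleGraph.fromRel fun a b =>
    b = 4 ∨ (a = 0 ∧ b = 1) ∨ (a = 1 ∧ b = 2) ∨ (a = 2 ∧ b = 3)

/-- The 4-wheel `W₄`: the cycle `0-1-2-3-0` together with the universal vertex `4`. -/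
def wheel4Graph : SimpleGraph (Fin 5) :=
  SimpleGraph.fromRel fun a b =>
    b = 4 ∨ (a = 0 ∧ b = 1) ∨ (a = 1 ∧ b = 2) ∨ (a = 2 ∧ b = 3) ∨ (a = 3 ∧ b = 0)

/-- The disjoint union of `p` copies of `K₂` and `q` copies of `K₁`. -/
def pK2qK1 (p q : ℕ) : SimpleGraph ((Fin p × Fin 2) ⊕ Fin q) :=
  SimpleGraph.fromRel fun a b => ∃ i : Fin p, a = Sum.inl (i, 0) ∧ b = Sum.inl (i, 1)

/-
A vertex `x` of degree at least two cannot be a leaf, so it lies in the core `S` and has a pendant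
neighbour `v`. A maximal matching covers an endpoint of every edge, in particular of `xv`; and if it
covers `v`, it does so by the edge `vx`, the only edge at `v`.
-/

namespace SimpleGraph

variable {V : Type*} {G : SimpleGraph V} {M : Set (Sym2 V)}

theorem IsMatchingSet.insert_of_not_saturatedBy (hM : G.IsMatchingSet M) {u v : V}
    (huv : G.Adj u v) (hu : ¬ SaturatedBy M u) (hv : ¬ SaturatedBy M v) :
    G.IsMatchingSet (insert s(u, v) M) := by
  have disjoint_new : ∀ f ∈ M, ∀ w ∈ s(u, v), w ∉ f := by
    rintro f hf w hw hwf
    rcases Sym2.mem_iff.mp hw with rfl | rfl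
    exacts [hu ⟨f, hf, hwf⟩, hv ⟨f, hf, hwf⟩]
  refine ⟨Set.insert_subset huv hM.1, ?_⟩
  rintro e (rfl | he) f (rfl | hf) hne w ⟨hwe, hwf⟩
  · exact hne rfl
  · exact disjoint_new f hf w hwe hwf
  · exact disjoint_new e he w hwf hwe
  · exact hM.2 e he f hf hne w ⟨hwe, hwf⟩

theorem saturatedBy_or_saturatedBy_of_maximal (hM : Maximal G.IsMatchingSet M) {u v : V}
    (huv : G.Adj u v) : SaturatedBy M u ∨ SaturatedBy M v := by
  by_contra! h
  have hsub := hM.2 (hM.1.insert_of_not_saturatedBy huv h.1 h.2) (Set.subset_insert _ _)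
  exact h.1 ⟨s(u, v), hsub (Set.mem_insert _ _), Sym2.mem_mk_left u v⟩

theorem SaturatedBy.of_neighborSet_eq_singleton (hMG : M ⊆ G.edgeSet) {v x : V}
    (hv : G.neighborSet v = {x}) (hsat : SaturatedBy M v) : SaturatedBy M x := by
  obtain ⟨e, he, hve⟩ := hsat
  obtain ⟨b, rfl⟩ := Sym2.mem_iff_exists.mp hve
  have hb : b ∈ G.neighborSet v := hMG he
  rw [hv, Set.mem_singleton_iff] at hb
  exact ⟨s(v, b), he, hb ▸ Sym2.mem_mk_right v b⟩

namespace IsLeafExtension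

variable {S : Set V}

theorem mem_of_two_le_ncard_neighborSet (h : G.IsLeafExtension S) {x : V}
    (hx : 2 ≤ (G.neighborSet x).ncard) : x ∈ S := by
  by_contra hxS
  have := (h.1 x hxS).1
  omega

theorem exists_pendant_neighbor (h : G.IsLeafExtension S) {x : V} (hxS : x ∈ S) :
    ∃ v, G.Adj x v ∧ G.neighborSet v = {x} := by
  obtain ⟨v, hvS, hxv⟩ := h.2 x hxS
  obtain ⟨a, ha⟩ := Set.ncard_eq_one.mp (h.1 v hvS).1
  have hx : x ∈ G.neighborSet v := hxv.symm
  rw [ha, Set.mem_singleton_iff] at hx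
  exact ⟨v, hxv, hx ▸ ha⟩

end IsLeafExtension

end SimpleGraph

theorem stmt_1_general {V : Type*} (G : SimpleGraph V) (S : Set V)
    (h : G.IsLeafExtension S) : G.RandomlyInternallyMatchable := by
  intro M hM
  refine ⟨hM.1, fun x hx => ?_⟩
  obtain ⟨v, hxv, hv⟩ := h.exists_pendant_neighbor (h.mem_of_two_le_ncard_neighborSet hx)
  exact (saturatedBy_or_saturatedBy_of_maximal hM hxv).elim id
    (SaturatedBy.of_neighborSet_eq_singleton hM.1.1 hv)

/-- Every finite graph that is a leaf extension is randomly internally matchable. -/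
theorem stmt_1 {V : Type*} [Fintype V] (G : SimpleGraph V) (S : Set V)
    (h : G.IsLeafExtension S) : G.RandomlyInternallyMatchable :=
  stmt_1_general G S h
end

section
/- Every claw-free CIS graph is gem-free. -/
open SimpleGraph

/-!
Let `a - b - c - d` be the path of an induced gem and `u` its universal vertex (`φ 0, …, φ 4`
below). Extend the triangle `{b, c, u}` to a maximal clique `C` and the non-edge `{a, d}` to a
maximal stable set `S`. A vertex `y ∈ C ∩ S` is non-adjacent to `a` and `d`, hence is none of
`b, c, u`; so it is adjacent to `b`, `c` and `u`, which makes it distinct from `a` and `d`, and `u`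
with `a, d, y` is an induced claw.
-/

theorem Set.Pairwise.exists_subset_maximal {α : Type*} {r : α → α → Prop} {s : Set α}
    (hs : s.Pairwise r) : ∃ t, s ⊆ t ∧ Maximal (fun u : Set α => u.Pairwise r) t :=
  zorn_subset_nonempty {u | u.Pairwise r}
    (fun _ hc hchain _ => ⟨_, (Set.pairwise_sUnion hchain.directedOn).2 hc,
      fun _ => Set.subset_sUnion_of_mem⟩) s hs

namespace SimpleGraph

variable {V : Type*} {G : SimpleGraph V}

theorem inducedFree_iff_not_isIndContained {W : Type*} {H : SimpleGraph W} :
    G.InducedFree H ↔ ¬ H ⊴ G := by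
  simp [InducedFree, isIndContained_iff_exists_iso_induce]

theorem IsStableSet.not_adj {S : Set V} (hS : G.IsStableSet S) {x y : V} (hx : x ∈ S)
    (hy : y ∈ S) : ¬ G.Adj x y :=
  fun h => hS hx hy h.ne h

theorem InducedFree.adj_or_adj_or_adj_of_claw (hclaw : G.InducedFree clawGraph) {u a b c : V}
    (hua : G.Adj u a) (hub : G.Adj u b) (huc : G.Adj u c)
    (hab : a ≠ b) (hac : a ≠ c) (hbc : b ≠ c) : G.Adj a b ∨ G.Adj a c ∨ G.Adj b c := by
  by_contra! h
  obtain ⟨nab, nac, nbc⟩ := h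
  let f : Fin 1 ⊕ Fin 3 → V := Sum.elim (fun _ => u) ![a, b, c]
  have hf_inj : f.Injective := by
    rintro (i | i) (j | j) h <;> fin_cases i <;> fin_cases j <;>
      simp_all [f, hua.ne, hub.ne, huc.ne, hua.ne', hub.ne', huc.ne']
  have hf_adj : ∀ i j, G.Adj (f i) (f j) ↔ clawGraph.Adj i j := by
    rintro (i | i) (j | j) <;> fin_cases i <;> fin_cases j <;>
      simp [f, clawGraph, hua, hub, huc, hua.symm, hub.symm, huc.symm, nab, nac, nbc,
        mt G.adj_symm nab, mt G.adj_symm nac, mt G.adj_symm nbc]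
  exact inducedFree_iff_not_isIndContained.1 hclaw ⟨⟨⟨f, hf_inj⟩, hf_adj _ _⟩⟩

theorem IsCIS.not_isIndContained_gemGraph (hcis : G.IsCIS) (hclaw : G.InducedFree clawGraph) :
    ¬ gemGraph ⊴ G := by
  rintro ⟨φ⟩
  have adj (i j : Fin 5) (h : gemGraph.Adj i j := by simp [gemGraph]) : G.Adj (φ i) (φ j) :=
    φ.map_adj_iff.2 h
  have n02 : ¬ G.Adj (φ 0) (φ 2) := mt φ.map_adj_iff.1 (by simp [gemGraph])
  have n03 : ¬ G.Adj (φ 0) (φ 3) := mt φ.map_adj_iff.1 (by simp [gemGraph])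
  have n13 : ¬ G.Adj (φ 1) (φ 3) := mt φ.map_adj_iff.1 (by simp [gemGraph])
  have hclique : G.IsClique {φ 1, φ 2, φ 4} := by
    simp [IsClique, Set.pairwise_insert, adj 1 2, adj 1 4, adj 2 4, (adj 1 2).symm, (adj 1 4).symm,
      (adj 2 4).symm]
  have hstable : G.IsStableSet {φ 0, φ 3} := by
    simp [IsStableSet, Set.pairwise_insert, n03, mt G.adj_symm n03]
  obtain ⟨C, hsubC, hC⟩ := hclique.exists_subset_maximal
  obtain ⟨S, hsubS, hS⟩ : ∃ S, _ ∧ Maximal G.IsStableSet S := hstable.exists_subset_maximal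
  obtain ⟨y, hyC, hyS⟩ := hcis C S hC hS
  have n0y : ¬ G.Adj (φ 0) y := hS.prop.not_adj (hsubS (by simp)) hyS
  have n3y : ¬ G.Adj (φ 3) y := hS.prop.not_adj (hsubS (by simp)) hyS
  have adj_y (i : Fin 5) (hi : φ i ∈ ({φ 1, φ 2, φ 4} : Set V)) (hne : y ≠ φ i) :
      G.Adj y (φ i) :=
    hC.prop hyC (hsubC hi) hne
  have hy1 : y ≠ φ 1 := by rintro rfl; exact n0y (adj 0 1)
  have hy2 : y ≠ φ 2 := by rintro rfl; exact n3y (adj 2 3).symm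
  have hy4 : y ≠ φ 4 := by rintro rfl; exact n0y (adj 0 4)
  have h0y : φ 0 ≠ y := by rintro rfl; exact n02 (adj_y 2 (by simp) hy2)
  have h3y : φ 3 ≠ y := by rintro rfl; exact n13 (adj_y 1 (by simp) hy1).symm
  have h03 : φ 0 ≠ φ 3 := φ.injective.ne (by decide)
  rcases hclaw.adj_or_adj_or_adj_of_claw (adj 0 4).symm (adj 3 4).symm
    (adj_y 4 (by simp) hy4).symm h03 h0y h3y with h | h | h
  exacts [n03 h, n0y h, n3y h]

end SimpleGraph

theorem stmt_2_general {V : Type*} (G : SimpleGraph V)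
    (hclaw : G.InducedFree clawGraph) (hcis : G.IsCIS) :
    G.InducedFree gemGraph :=
  SimpleGraph.inducedFree_iff_not_isIndContained.2 (hcis.not_isIndContained_gemGraph hclaw)

/-- Every claw-free CIS graph is gem-free. -/
theorem stmt_2 {V : Type*} [Fintype V] (G : SimpleGraph V)
    (hclaw : G.InducedFree clawGraph) (hcis : G.IsCIS) :
    G.InducedFree gemGraph :=
  stmt_2_general G hclaw hcis
end

section
/- Every connected and co-connected finite simple graph that is both claw-free and gem-free is W_4-free. -/
open SimpleGraph

/-! Fix an induced `W₄` with hub `h` and rim `a b c d`, and call a vertex a hub of the rim if it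
is adjacent to all of `a b c d`. Claw- and gem-freeness force every neighbour of a vertex that is
`h`, adjacent to `h`, or a hub to be of one of these three kinds again, so by connectivity every
vertex is. Applied to an arbitrary hub in place of `h`, this says that every non-neighbour of a hub
is a hub; by co-connectivity every vertex, in particular the rim vertex `a`, is then a hub, which is
absurd. -/

namespace SimpleGraph

variable {V : Type*} {G : SimpleGraph V}

theorem Preconnected.mem_of_adj_closed (hG : G.Preconnected) {S : Set V}
    (hS : ∀ u v, G.Adj u v → u ∈ S → v ∈ S) {u : V} (hu : u ∈ S) (v : V) : v ∈ S := by
  obtain ⟨p⟩ := hG u v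
  induction p with
  | nil => exact hu
  | cons huw _ ih => exact ih (hS _ _ huw hu)

theorem isIndContained_of_adj_iff {W : Type*} {H : SimpleGraph W} {f : W → V}
    (hf : Function.Injective f) (hadj : ∀ a b, H.Adj a b ↔ G.Adj (f a) (f b)) : H ⊴ G :=
  ⟨⟨⟨f, hf⟩, (hadj _ _).symm⟩⟩

theorem InducedFree.false_of_induced_claw (hclaw : G.InducedFree clawGraph) {c x y z : V}
    (hx : G.Adj c x) (hy : G.Adj c y) (hz : G.Adj c z)
    (nxy : ¬ G.Adj x y) (nxz : ¬ G.Adj x z) (nyz : ¬ G.Adj y z)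
    (dxy : x ≠ y) (dxz : x ≠ z) (dyz : y ≠ z) : False := by
  refine inducedFree_iff_not_isIndContained.mp hclaw
    (isIndContained_of_adj_iff (f := Sum.elim (fun _ => c) ![x, y, z]) ?_ ?_)
  · have := hx.ne; have := hy.ne; have := hz.ne
    rintro (a | a) (b | b) hab
    · simp [Fin.fin_one_eq_zero a, Fin.fin_one_eq_zero b]
    all_goals fin_cases a <;> try fin_cases b
    all_goals simp_all
  · rintro (a | a) (b | b)
    all_goals fin_cases a <;> fin_cases b
    all_goals simp_all [clawGraph, G.adj_comm]

theorem InducedFree.false_of_induced_gem (hgem : G.InducedFree gemGraph) {a b c d u : V}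
    (hab : G.Adj a b) (hbc : G.Adj b c) (hcd : G.Adj c d)
    (nac : ¬ G.Adj a c) (nad : ¬ G.Adj a d) (nbd : ¬ G.Adj b d)
    (hua : G.Adj u a) (hub : G.Adj u b) (huc : G.Adj u c) (hud : G.Adj u d)
    (dac : a ≠ c) (dad : a ≠ d) (dbd : b ≠ d) : False := by
  refine inducedFree_iff_not_isIndContained.mp hgem
    (isIndContained_of_adj_iff (f := ![a, b, c, d, u]) ?_ ?_)
  · have := hab.ne; have := hbc.ne; have := hcd.ne
    have := hua.ne; have := hub.ne; have := huc.ne; have := hud.ne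
    intro i j hij
    fin_cases i <;> fin_cases j <;> simp_all
  · intro i j
    fin_cases i <;> fin_cases j <;> simp_all [gemGraph, G.adj_comm, eq_comm]

structure IsInducedSquare (G : SimpleGraph V) (a b c d : V) : Prop where
  adj_ab : G.Adj a b
  adj_bc : G.Adj b c
  adj_cd : G.Adj c d
  adj_da : G.Adj d a
  not_adj_ac : ¬ G.Adj a c
  not_adj_bd : ¬ G.Adj b d
  ne_ac : a ≠ c
  ne_bd : b ≠ d

def IsHub (G : SimpleGraph V) (a b c d u : V) : Prop :=
  G.Adj u a ∧ G.Adj u b ∧ G.Adj u c ∧ G.Adj u d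

variable {a b c d h u w : V}

namespace IsInducedSquare

theorem rotate (sq : G.IsInducedSquare a b c d) : G.IsInducedSquare b c d a :=
  ⟨sq.adj_bc, sq.adj_cd, sq.adj_da, sq.adj_ab, sq.not_adj_bd, fun hca => sq.not_adj_ac hca.symm,
    sq.ne_bd, sq.ne_ac.symm⟩

theorem reflect (sq : G.IsInducedSquare a b c d) : G.IsInducedSquare a d c b :=
  ⟨sq.adj_da.symm, sq.adj_cd.symm, sq.adj_bc.symm, sq.adj_ab.symm, sq.not_adj_ac,
    fun hdb => sq.not_adj_bd hdb.symm, sq.ne_ac, sq.ne_bd.symm⟩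

end IsInducedSquare

namespace IsHub

theorem rotate (hub : G.IsHub a b c d h) : G.IsHub b c d a h :=
  ⟨hub.2.1, hub.2.2.1, hub.2.2.2, hub.1⟩

theorem reflect (hub : G.IsHub a b c d h) : G.IsHub a d c b h :=
  ⟨hub.1, hub.2.2.2, hub.2.2.1, hub.2.1⟩

end IsHub

section Wheel

variable (hclaw : G.InducedFree clawGraph) (hgem : G.InducedFree gemGraph)
  (sq : G.IsInducedSquare a b c d) (hh : G.IsHub a b c d h)
include hgem sq hh

theorem adj_of_adj_adj_of_not_adj_hub (hwh : w ≠ h) (nhw : ¬ G.Adj h w)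
    (hwa : G.Adj w a) (hwb : G.Adj w b) : G.Adj w d := by
  by_contra nwd
  exact hgem.false_of_induced_gem hh.2.2.2.symm hh.2.1 hwb.symm
    (fun hdb => sq.not_adj_bd hdb.symm) (fun hdw => nwd hdw.symm) nhw
    sq.adj_da.symm hh.1.symm sq.adj_ab hwa.symm sq.ne_bd.symm
    (fun e => nhw (e ▸ hh.2.2.2)) (fun e => hwh e.symm)

include hclaw in
theorem isHub_of_adj_of_not_adj_hub (hwh : w ≠ h) (nhw : ¬ G.Adj h w) (hwa : G.Adj w a) :
    G.IsHub a b c d w := by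
  have hwb_or_hwd : G.Adj w b ∨ G.Adj w d := by
    by_contra! hc
    exact hclaw.false_of_induced_claw hwa.symm sq.adj_ab sq.adj_da.symm hc.1 hc.2 sq.not_adj_bd
      (fun e => nhw (e ▸ hh.2.1)) (fun e => nhw (e ▸ hh.2.2.2)) sq.ne_bd
  have hwb : G.Adj w b := hwb_or_hwd.elim id
    (adj_of_adj_adj_of_not_adj_hub hgem sq.reflect hh.reflect hwh nhw hwa)
  have hwd : G.Adj w d := adj_of_adj_adj_of_not_adj_hub hgem sq hh hwh nhw hwa hwb
  exact ⟨hwa, hwb,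
    adj_of_adj_adj_of_not_adj_hub hgem sq.rotate.reflect hh.rotate.reflect hwh nhw hwb hwa, hwd⟩

theorem adj_of_adj_not_adj_of_adj_hub (hhu : G.Adj h u) (huc : u ≠ c) (hud : u ≠ d)
    (hub : G.Adj u b) (nuc : ¬ G.Adj u c) : G.Adj u d := by
  by_contra nud
  exact hgem.false_of_induced_gem hub sq.adj_bc sq.adj_cd nuc nud sq.not_adj_bd
    hhu hh.2.1 hh.2.2.1 hh.2.2.2 huc hud sq.ne_bd

include hclaw in
theorem adj_opposite_of_adj_hub (hhu : G.Adj h u) :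
    (G.Adj u a ∧ G.Adj u c) ∨ (G.Adj u b ∧ G.Adj u d) := by
  by_cases hua : u = a
  · exact .inr (hua ▸ ⟨sq.adj_ab, sq.adj_da.symm⟩)
  by_cases hub : u = b
  · exact .inl (hub ▸ ⟨sq.adj_ab.symm, sq.adj_bc⟩)
  by_cases huc : u = c
  · exact .inr (huc ▸ ⟨sq.adj_bc.symm, sq.adj_cd⟩)
  by_cases hud : u = d
  · exact .inl (hud ▸ ⟨sq.adj_da, sq.adj_cd.symm⟩)
  have hac : G.Adj u a ∨ G.Adj u c := by
    by_contra! hc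
    exact hclaw.false_of_induced_claw hhu hh.1 hh.2.2.1 hc.1 hc.2 sq.not_adj_ac
      hua huc sq.ne_ac
  have hbd : G.Adj u b ∨ G.Adj u d := by
    by_contra! hc
    exact hclaw.false_of_induced_claw hhu hh.2.1 hh.2.2.2 hc.1 hc.2 sq.not_adj_bd
      hub hud sq.ne_bd
  have := adj_of_adj_not_adj_of_adj_hub hgem sq hh hhu huc hud
  have := adj_of_adj_not_adj_of_adj_hub hgem sq.reflect hh.reflect hhu huc hub
  have := adj_of_adj_not_adj_of_adj_hub hgem sq.rotate.rotate.reflect hh.rotate.rotate.reflect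
    hhu hua hud
  have := adj_of_adj_not_adj_of_adj_hub hgem sq.rotate.rotate hh.rotate.rotate hhu hua hub
  tauto

include hclaw in
theorem eq_or_adj_or_isHub_of_adj (hu : u = h ∨ G.Adj h u ∨ G.IsHub a b c d u)
    (huw : G.Adj u w) : w = h ∨ G.Adj h w ∨ G.IsHub a b c d w := by
  by_cases hwh : w = h
  · exact .inl hwh
  by_cases hhw : G.Adj h w
  · exact .inr (.inl hhw)
  refine .inr (.inr ?_)
  have hu_pair : (G.Adj u a ∧ G.Adj u c) ∨ (G.Adj u b ∧ G.Adj u d) := by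
    rcases hu with rfl | hhu | hubu
    · exact absurd huw hhw
    · exact adj_opposite_of_adj_hub hclaw hgem sq hh hhu
    · exact .inl ⟨hubu.1, hubu.2.2.1⟩
  have hne : ∀ {v}, G.Adj h v → w ≠ v := fun hv e => hhw (e ▸ hv)
  have hw_rim : G.Adj w a ∨ G.Adj w b ∨ G.Adj w c ∨ G.Adj w d := by
    by_contra! hc
    rcases hu_pair with ⟨hua, huc⟩ | ⟨hub, hud⟩
    · exact hclaw.false_of_induced_claw huw hua huc hc.1 hc.2.2.1 sq.not_adj_ac
        (hne hh.1) (hne hh.2.2.1) sq.ne_ac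
    · exact hclaw.false_of_induced_claw huw hub hud hc.2.1 hc.2.2.2 sq.not_adj_bd
        (hne hh.2.1) (hne hh.2.2.2) sq.ne_bd
  rcases hw_rim with hwa | hwb | hwc | hwd
  · exact isHub_of_adj_of_not_adj_hub hclaw hgem sq hh hwh hhw hwa
  · exact (isHub_of_adj_of_not_adj_hub hclaw hgem sq.rotate hh.rotate
      hwh hhw hwb).rotate.rotate.rotate
  · exact (isHub_of_adj_of_not_adj_hub hclaw hgem sq.rotate.rotate hh.rotate.rotate
      hwh hhw hwc).rotate.rotate
  · exact (isHub_of_adj_of_not_adj_hub hclaw hgem sq.rotate.rotate.rotate hh.rotate.rotate.rotate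
      hwh hhw hwd).rotate

end Wheel

theorem IsHub.of_compl_adj (hconn : G.Preconnected) (hclaw : G.InducedFree clawGraph)
    (hgem : G.InducedFree gemGraph) (sq : G.IsInducedSquare a b c d)
    (hu : G.IsHub a b c d u) (huw : Gᶜ.Adj u w) : G.IsHub a b c d w := by
  obtain ⟨hne, nadj⟩ := (G.compl_adj u w).mp huw
  have := hconn.mem_of_adj_closed (S := {v | v = u ∨ G.Adj u v ∨ G.IsHub a b c d v})
    (fun _ _ hxy hx => eq_or_adj_or_isHub_of_adj hclaw hgem sq hu hx hxy) (.inl rfl) w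
  exact (this.resolve_left hne.symm).resolve_left nadj

theorem isInducedSquare_and_isHub_of_embedding (f : wheel4Graph ↪g G) :
    G.IsInducedSquare (f 0) (f 1) (f 2) (f 3) ∧ G.IsHub (f 0) (f 1) (f 2) (f 3) (f 4) := by
  have adj : ∀ {i j}, wheel4Graph.Adj i j → G.Adj (f i) (f j) := f.map_adj_iff.mpr
  have nadj : ∀ {i j}, ¬ wheel4Graph.Adj i j → ¬ G.Adj (f i) (f j) := fun hn => hn ∘ f.map_adj_iff.mp
  exact ⟨⟨adj (by simp [wheel4Graph]), adj (by simp [wheel4Graph]), adj (by simp [wheel4Graph]),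
      adj (by simp [wheel4Graph]), nadj (by simp [wheel4Graph]), nadj (by simp [wheel4Graph]),
      f.injective.ne (by decide), f.injective.ne (by decide)⟩,
    ⟨adj (by simp [wheel4Graph]), adj (by simp [wheel4Graph]), adj (by simp [wheel4Graph]),
      adj (by simp [wheel4Graph])⟩⟩

end SimpleGraph

theorem stmt_3_general {V : Type*} (G : SimpleGraph V)
    (hconn : G.Connected) (hcoconn : Gᶜ.Connected)
    (hclaw : G.InducedFree clawGraph) (hgem : G.InducedFree gemGraph) :
    G.InducedFree wheel4Graph := by
  rw [inducedFree_iff_not_isIndContained]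
  rintro ⟨f⟩
  obtain ⟨sq, hh⟩ := isInducedSquare_and_isHub_of_embedding f
  have hub_rim : G.IsHub (f 0) (f 1) (f 2) (f 3) (f 0) :=
    hcoconn.preconnected.mem_of_adj_closed (S := {v | G.IsHub (f 0) (f 1) (f 2) (f 3) v})
      (fun _ _ huv hu => hu.of_compl_adj hconn.preconnected hclaw hgem sq huv) hh _
  exact G.loopless.irrefl _ hub_rim.1

/-- Every connected and co-connected {claw, gem}-free graph is `W₄`-free. -/
theorem stmt_3 {V : Type*} [Fintype V] (G : SimpleGraph V)
    (hconn : G.Connected) (hcoconn : Gᶜ.Connected)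
    (hclaw : G.InducedFree clawGraph) (hgem : G.InducedFree gemGraph) :
    G.InducedFree wheel4Graph :=
  stmt_3_general G hconn hcoconn hclaw hgem
end

section
/- For every n ≥ 1, the line graph L(K_{n,n}) of the complete bipartite graph K_{n,n} is a CIS graph. -/
open SimpleGraph

/-!
Identify the edges of `K_{n,n}` with the cells of an `n × n` board: two edges are adjacent in the
line graph iff their cells share a row or a column. A clique then lies in one row or one column,
i.e. it is a star at some vertex `v`, and a maximal one contains every edge at `v`. A maximal stable
set is a set of non-attacking rooks attacking every cell; if it left row `i` empty it would need a
rook in every column, hence `n` rooks in `n` distinct rows, row `i` among them. So every maximal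
stable set has an edge at `v`, and that edge lies in the maximal clique.
-/

namespace SimpleGraph

variable {V : Type*} {H : SimpleGraph V}

theorem mem_of_maximal_isClique_lineGraph {C : Set H.edgeSet}
    (hC : Maximal H.lineGraph.IsClique C) {v : V}
    (hv : ∀ e ∈ C, v ∈ (e : Sym2 V)) {f : H.edgeSet} (hf : v ∈ (f : Sym2 V)) : f ∈ C :=
  hC.mem_of_prop_insert <| isClique_insert.2
    ⟨hC.1, fun e he hne => lineGraph_adj_iff_exists.2 ⟨hne, v, hf, hv e he⟩⟩

theorem isCIS_lineGraph_of_forall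
    (hstar : ∀ C, Maximal H.lineGraph.IsClique C → ∃ v, ∀ e ∈ C, v ∈ (e : Sym2 V))
    (hcover : ∀ S, Maximal H.lineGraph.IsStableSet S → ∀ v, ∃ e ∈ S, v ∈ (e : Sym2 V)) :
    H.lineGraph.IsCIS := by
  intro C S hC hS
  obtain ⟨v, hv⟩ := hstar C hC
  obtain ⟨f, hfS, hvf⟩ := hcover S hS v
  exact ⟨f, mem_of_maximal_isClique_lineGraph hC hv hvf, hfS⟩

end SimpleGraph

theorem Set.forall_fst_eq_or_forall_snd_eq {α β : Type*} {T : Set (α × β)}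
    (hT : T.Pairwise fun p q => p.1 = q.1 ∨ p.2 = q.2) {p : α × β} (hp : p ∈ T) :
    (∀ q ∈ T, q.1 = p.1) ∨ (∀ q ∈ T, q.2 = p.2) := by
  by_contra! ⟨⟨q, hq, hq1⟩, ⟨r, hr, hr2⟩⟩
  have hq2 : q.2 = p.2 := (hT hq hp (by grind)).resolve_left hq1
  have hr1 : r.1 = p.1 := (hT hr hp (by grind)).resolve_right hr2
  grind [hT hq hr (by grind)]

theorem Set.image_eq_univ_of_injOn_of_forall_or {E ι : Type*} [Finite ι] {r c : E → ι}
    {S : Set E} (hr : S.InjOn r) (hcover : ∀ i j, i ∈ r '' S ∨ j ∈ c '' S) : r '' S = univ := by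
  refine eq_univ_of_forall fun i => by_contra fun hi => ?_
  choose φ hφS hφc using fun j => (hcover i j).resolve_left hi
  have hinj : Function.Injective (r ∘ φ) := fun j₁ j₂ h => by
    rw [← hφc j₁, ← hφc j₂, hr (hφS j₁) (hφS j₂) h]
  obtain ⟨j, hj⟩ := Finite.surjective_of_injective hinj i
  exact hi ⟨φ j, hφS j, hj⟩

namespace completeBipartiteGraph

variable {α β : Type*}

def edge (p : α × β) : (completeBipartiteGraph α β).edgeSet :=
  ⟨s(.inl p.1, .inr p.2), Or.inl ⟨rfl, rfl⟩⟩

@[simp]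
theorem inl_mem_edge {a : α} {p : α × β} : .inl a ∈ (edge p : Sym2 (α ⊕ β)) ↔ a = p.1 := by
  simp [edge]

@[simp]
theorem inr_mem_edge {b : β} {p : α × β} : .inr b ∈ (edge p : Sym2 (α ⊕ β)) ↔ b = p.2 := by
  simp [edge]

theorem edge_injective : Function.Injective (edge : α × β → _) := by
  intro p q h
  have h1 : .inl p.1 ∈ (edge q : Sym2 (α ⊕ β)) := h ▸ inl_mem_edge.2 rfl
  have h2 : .inr p.2 ∈ (edge q : Sym2 (α ⊕ β)) := h ▸ inr_mem_edge.2 rfl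
  exact Prod.ext (inl_mem_edge.1 h1) (inr_mem_edge.1 h2)

theorem edge_surjective : Function.Surjective (edge : α × β → _) := by
  rintro ⟨e, he⟩
  induction e using Sym2.ind with
  | _ x y =>
    rcases x with a | b <;> rcases y with a' | b' <;> simp [completeBipartiteGraph] at he
    · exact ⟨(a, b'), rfl⟩
    · exact ⟨(a', b), Subtype.ext Sym2.eq_swap⟩

theorem lineGraph_adj_edge {p q : α × β} :
    (completeBipartiteGraph α β).lineGraph.Adj (edge p) (edge q) ↔
      p ≠ q ∧ (p.1 = q.1 ∨ p.2 = q.2) := by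
  rw [lineGraph_adj_iff_exists, edge_injective.ne_iff]
  refine and_congr_right fun _ => ⟨?_, ?_⟩
  · rintro ⟨a | b, hp, hq⟩ <;> simp_all
  · rintro (h | h)
    · exact ⟨.inl p.1, by simp [h]⟩
    · exact ⟨.inr p.2, by simp [h]⟩

theorem exists_forall_mem_of_isClique_lineGraph [Nonempty α]
    {C : Set (completeBipartiteGraph α β).edgeSet}
    (hC : (completeBipartiteGraph α β).lineGraph.IsClique C) :
    ∃ v, ∀ e ∈ C, v ∈ (e : Sym2 (α ⊕ β)) := by
  rcases C.eq_empty_or_nonempty with rfl | ⟨e, he⟩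
  · exact ⟨.inl (Classical.arbitrary α), by simp⟩
  obtain ⟨p, rfl⟩ := edge_surjective e
  have hT : (edge ⁻¹' C).Pairwise fun p q : α × β => p.1 = q.1 ∨ p.2 = q.2 :=
    fun q hq r hr hne => (lineGraph_adj_edge.1 (hC hq hr (edge_injective.ne hne))).2
  rcases Set.forall_fst_eq_or_forall_snd_eq hT (p := p) he with h | h
  · refine ⟨.inl p.1, fun e he => ?_⟩
    obtain ⟨q, rfl⟩ := edge_surjective e
    exact inl_mem_edge.2 (h q he).symm
  · refine ⟨.inr p.2, fun e he => ?_⟩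
    obtain ⟨q, rfl⟩ := edge_surjective e
    exact inr_mem_edge.2 (h q he).symm

variable {S : Set (completeBipartiteGraph α β).edgeSet}

theorem fst_ne_and_snd_ne_of_isStableSet
    (hS : (completeBipartiteGraph α β).lineGraph.IsStableSet S) {p q : α × β}
    (hp : edge p ∈ S) (hq : edge q ∈ S) (hne : p ≠ q) : p.1 ≠ q.1 ∧ p.2 ≠ q.2 := by
  have hnadj : ¬(completeBipartiteGraph α β).lineGraph.Adj (edge p) (edge q) :=
    hS hp hq (edge_injective.ne hne)
  rw [lineGraph_adj_edge] at hnadj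
  tauto

theorem fst_mem_or_snd_mem_of_maximal_isStableSet
    (hS : Maximal (completeBipartiteGraph α β).lineGraph.IsStableSet S) (a : α) (b : β) :
    a ∈ Prod.fst '' (edge ⁻¹' S) ∨ b ∈ Prod.snd '' (edge ⁻¹' S) := by
  by_contra! ⟨ha, hb⟩
  refine ha ⟨(a, b), hS.mem_of_prop_insert (hS.1.insert fun e he _ => ?_), rfl⟩
  obtain ⟨q, rfl⟩ := edge_surjective e
  have hqa : a ≠ q.1 := fun h => ha ⟨q, he, h.symm⟩
  have hqb : b ≠ q.2 := fun h => hb ⟨q, he, h.symm⟩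
  simp [lineGraph_adj_edge, hqa, hqb, hqa.symm, hqb.symm]

theorem exists_mem_of_maximal_isStableSet_lineGraph {ι : Type*} [Finite ι]
    {S : Set (completeBipartiteGraph ι ι).edgeSet}
    (hS : Maximal (completeBipartiteGraph ι ι).lineGraph.IsStableSet S) (v : ι ⊕ ι) :
    ∃ e ∈ S, v ∈ (e : Sym2 (ι ⊕ ι)) := by
  have hfst : (edge ⁻¹' S).InjOn Prod.fst := fun p hp q hq h =>
    by_contra fun hne => (fst_ne_and_snd_ne_of_isStableSet hS.1 hp hq hne).1 h
  have hsnd : (edge ⁻¹' S).InjOn Prod.snd := fun p hp q hq h =>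
    by_contra fun hne => (fst_ne_and_snd_ne_of_isStableSet hS.1 hp hq hne).2 h
  have hcover := fst_mem_or_snd_mem_of_maximal_isStableSet hS
  rcases v with i | j
  · obtain ⟨p, hp, rfl⟩ : i ∈ Prod.fst '' (edge ⁻¹' S) := by
      rw [Set.image_eq_univ_of_injOn_of_forall_or hfst hcover]; trivial
    exact ⟨edge p, hp, by simp⟩
  · obtain ⟨p, hp, rfl⟩ : j ∈ Prod.snd '' (edge ⁻¹' S) := by
      rw [Set.image_eq_univ_of_injOn_of_forall_or hsnd fun j i => (hcover i j).symm]; trivial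
    exact ⟨edge p, hp, by simp⟩

end completeBipartiteGraph

/-- For every `n ≥ 1`, the line graph of `K_{n,n}` is a CIS graph. -/
theorem stmt_6 (n : ℕ) (hn : 1 ≤ n) :
    ((completeBipartiteGraph (Fin n) (Fin n)).lineGraph).IsCIS :=
  have : Nonempty (Fin n) := ⟨⟨0, hn⟩⟩
  isCIS_lineGraph_of_forall
    (fun _ hC => completeBipartiteGraph.exists_forall_mem_of_isClique_lineGraph hC.1)
    (fun _ hS => completeBipartiteGraph.exists_mem_of_maximal_isStableSet_lineGraph hS)
end

section
/- Let H be a finite connected randomly internally matchable simple graph and let w : E(H) → ℕ assign a positive integer weight to each edge. Then the total weight of all edges satisfies Σ_{e ∈ E(H)} w(e) ≤ Δ_w(H) · ν(H), where Δ_w(H) = max_{v ∈ V(H)} Σ_{e incident to v} w(e) is the maximum weighted degree and ν(H) is the matching number of H. -/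
open SimpleGraph

/-!
Call a vertex internal if it has degree at least two, and give each vertex one unit of charge
for being internal and one for having a non-internal neighbour. Every edge carries charge at
least two at its endpoints, so `2 ∑ w ≤ ∑_v charge v · d_w(v) ≤ Δ_w · ∑_v charge v`. In a
randomly internally matchable graph a maximum matching saturates every charged vertex, and each
of its edges carries charge at most two: if `u` is internal with a non-internal neighbour `x`
and `uv` is a matching edge, exchanging `uv` for `ux` gives another maximum, hence maximal,
matching that misses `v`, so `v` is not internal either. Hence `∑_v charge v ≤ 2 ν`.
-/

namespace SimpleGraph

variable {V : Type*} (G : SimpleGraph V)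

def IsInternal (v : V) : Prop := 2 ≤ (G.neighborSet v).ncard

open Classical in
noncomputable def charge (v : V) : ℕ :=
  (if G.IsInternal v then 1 else 0) + if ∃ x, G.Adj v x ∧ ¬ G.IsInternal x then 1 else 0

variable {G}

theorem sum_mul_sum_incidenceFinset [Fintype V] [DecidableEq V] [DecidableRel G.Adj]
    {R : Type*} [CommSemiring R] (f : V → R) (w : Sym2 V → R) :
    ∑ v, f v * ∑ e ∈ G.incidenceFinset v, w e =
      ∑ e ∈ G.edgeFinset, w e * ∑ v ∈ e.toFinset, f v := by
  simp_rw [incidenceFinset_eq_filter, Finset.mul_sum]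
  rw [Finset.sum_comm' (t' := G.edgeFinset) (s' := Sym2.toFinset) (by simp; tauto)]
  simp_rw [mul_comm]

theorem charge_le_two (v : V) : G.charge v ≤ 2 := by
  unfold charge
  split_ifs <;> simp

theorem charge_eq_two {v : V} (h : G.charge v = 2) :
    G.IsInternal v ∧ ∃ x, G.Adj v x ∧ ¬ G.IsInternal x := by
  unfold charge at h
  split_ifs at h <;> simp_all

theorem two_le_charge_add_charge {a b : V} (hab : G.Adj a b) : 2 ≤ G.charge a + G.charge b := by
  have ha : ¬ G.IsInternal a → ∃ x, G.Adj b x ∧ ¬ G.IsInternal x := fun ha => ⟨a, hab.symm, ha⟩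
  have hb : ¬ G.IsInternal b → ∃ x, G.Adj a x ∧ ¬ G.IsInternal x := fun hb => ⟨b, hab, hb⟩
  unfold charge
  split_ifs <;> simp_all

theorem two_le_sum_charge_of_mem_edgeSet [DecidableEq V] {e : Sym2 V} (he : e ∈ G.edgeSet) :
    2 ≤ ∑ v ∈ e.toFinset, G.charge v := by
  induction e using Sym2.ind with
  | _ a b =>
    rw [Sym2.toFinset_mk_eq, Finset.sum_pair (G.ne_of_adj he)]
    exact two_le_charge_add_charge he

theorem adj_iff_eq_of_not_isInternal [Finite V] {a b : V} (hab : G.Adj a b)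
    (ha : ¬ G.IsInternal a) {c : V} : G.Adj a c ↔ c = b := by
  have hsub : {b} ⊆ G.neighborSet a := Set.singleton_subset_iff.2 hab
  have hN : {b} = G.neighborSet a :=
    Set.eq_of_subset_of_ncard_le hsub (by rw [Set.ncard_singleton]; unfold IsInternal at ha; omega)
  rw [← mem_neighborSet, ← hN, Set.mem_singleton_iff]

theorem eq_of_not_isInternal_of_mem_edgeSet [Finite V] {a b : V} (hab : G.Adj a b)
    (ha : ¬ G.IsInternal a) {e : Sym2 V} (he : e ∈ G.edgeSet) (hae : a ∈ e) : e = s(a, b) := by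
  obtain ⟨c, rfl⟩ := Sym2.mem_iff_exists.1 hae
  rw [(adj_iff_eq_of_not_isInternal hab ha).1 (G.mem_edgeSet.1 he)]

namespace IsMatchingSet

variable {M : Set (Sym2 V)}

theorem eq_of_mem (hM : G.IsMatchingSet M) {e f : Sym2 V} (he : e ∈ M) (hf : f ∈ M) {v : V}
    (hve : v ∈ e) (hvf : v ∈ f) : e = f :=
  by_contra fun hne => hM.2 e he f hf hne v ⟨hve, hvf⟩

theorem insert_of_not_saturatedBy_s12 {a b : V} (hM : G.IsMatchingSet M) (hab : G.Adj a b)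
    (ha : ¬ SaturatedBy M a) (hb : ¬ SaturatedBy M b) : G.IsMatchingSet (insert s(a, b) M) := by
  have hfresh : ∀ f ∈ M, ∀ v, v ∈ s(a, b) → v ∈ f → False := by
    intro f hf v hv hvf
    rcases Sym2.mem_iff.1 hv with rfl | rfl
    exacts [ha ⟨f, hf, hvf⟩, hb ⟨f, hf, hvf⟩]
  refine ⟨Set.insert_subset hab hM.1, ?_⟩
  rintro e (rfl | he) f (rfl | hf) hne v ⟨hve, hvf⟩
  exacts [hne rfl, hfresh f hf v hve hvf, hfresh e he v hvf hve, hM.2 e he f hf hne v ⟨hve, hvf⟩]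

theorem exchange {e : Sym2 V} {u x : V} (hM : G.IsMatchingSet M) (he : e ∈ M) (hue : u ∈ e)
    (hux : G.Adj u x) (hx : ¬ SaturatedBy M x) :
    G.IsMatchingSet (insert s(u, x) (M \ {e})) :=
  insert_of_not_saturatedBy_s12
    ⟨Set.sdiff_subset.trans hM.1, fun f hf g hg hne => hM.2 f hf.1 g hg.1 hne⟩ hux
    (fun ⟨_, hf, huf⟩ => hf.2 (hM.eq_of_mem hf.1 he huf hue))
    (fun ⟨f, hf, hxf⟩ => hx ⟨f, hf.1, hxf⟩)

end IsMatchingSet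

theorem Maximal.saturatedBy_or_saturatedBy {M : Set (Sym2 V)} (hM : Maximal G.IsMatchingSet M)
    {a b : V} (hab : G.Adj a b) : SaturatedBy M a ∨ SaturatedBy M b := by
  by_contra! h
  have hins := hM.1.insert_of_not_saturatedBy_s12 hab h.1 h.2
  exact h.1 ⟨s(a, b), hM.2 hins (Set.subset_insert _ _) (Set.mem_insert _ _),
    Sym2.mem_mk_left a b⟩

section Finite

variable [Finite V]

theorem bddAbove_matchingSizes :
    BddAbove {n | ∃ M : Set (Sym2 V), G.IsMatchingSet M ∧ M.ncard = n} :=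
  ⟨Nat.card (Sym2 V), by
    rintro n ⟨M, -, rfl⟩
    exact Set.ncard_le_card M⟩

theorem IsMatchingSet.ncard_le_matchingNumber {M : Set (Sym2 V)} (hM : G.IsMatchingSet M) :
    M.ncard ≤ G.matchingNumber :=
  le_csSup bddAbove_matchingSizes ⟨M, hM, rfl⟩

theorem exists_isMatchingSet_ncard_eq_matchingNumber :
    ∃ M : Set (Sym2 V), G.IsMatchingSet M ∧ M.ncard = G.matchingNumber :=
  Nat.sSup_mem (s := {n | ∃ M : Set (Sym2 V), G.IsMatchingSet M ∧ M.ncard = n})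
    ⟨0, ∅, ⟨Set.empty_subset _, by simp⟩, Set.ncard_empty _⟩ bddAbove_matchingSizes

theorem IsMatchingSet.maximal_of_ncard_eq {M : Set (Sym2 V)} (hM : G.IsMatchingSet M)
    (hcard : M.ncard = G.matchingNumber) : Maximal G.IsMatchingSet M :=
  ⟨hM, fun N hN hMN =>
    (Set.eq_of_subset_of_ncard_le hMN (hcard ▸ hN.ncard_le_matchingNumber)).symm.le⟩

variable (hrim : G.RandomlyInternallyMatchable)
include hrim

theorem RandomlyInternallyMatchable.saturatedBy_of_charge_pos {M : Set (Sym2 V)}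
    (hM : Maximal G.IsMatchingSet M) {v : V} (hv : 0 < G.charge v) : SaturatedBy M v := by
  by_cases hvI : G.IsInternal v
  · exact (hrim M hM).2 v hvI
  obtain ⟨x, hvx, hx⟩ : ∃ x, G.Adj v x ∧ ¬ G.IsInternal x := by
    by_contra h
    simp [charge, hvI, h] at hv
  rcases hM.saturatedBy_or_saturatedBy hvx with hv_sat | ⟨f, hf, hxf⟩
  · exact hv_sat
  refine ⟨f, hf, ?_⟩
  rw [eq_of_not_isInternal_of_mem_edgeSet hvx.symm hx (hM.1.1 hf) hxf]
  exact Sym2.mem_mk_right x v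

theorem RandomlyInternallyMatchable.not_isInternal_of_exchange {M : Set (Sym2 V)}
    (hM : G.IsMatchingSet M) (hcard : M.ncard = G.matchingNumber) {u v x : V}
    (huv : s(u, v) ∈ M) (hux : G.Adj u x) (hx : ¬ G.IsInternal x) (hxv : x ≠ v) :
    ¬ G.IsInternal v := by
  have hx_free : ¬ SaturatedBy M x := by
    rintro ⟨f, hf, hxf⟩
    have hfu := eq_of_not_isInternal_of_mem_edgeSet hux.symm hx (hM.1 hf) hxf
    have hfuv := hM.eq_of_mem hf huv (hfu ▸ Sym2.mem_mk_right x u) (Sym2.mem_mk_left u v)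
    rcases Sym2.mem_iff.1 (hfuv ▸ hxf) with h | h
    exacts [hux.ne h.symm, hxv h]
  set M' := insert s(u, x) (M \ {s(u, v)})
  have hM' : G.IsMatchingSet M' := hM.exchange huv (Sym2.mem_mk_left u v) hux hx_free
  have hcard' : M'.ncard = G.matchingNumber := by
    rw [Set.ncard_insert_of_notMem fun h => hx_free ⟨_, h.1, Sym2.mem_mk_right u x⟩, ← hcard,
      Set.ncard_sdiff_singleton_add_one huv]
  intro hvI
  obtain ⟨g, hg, hvg⟩ := (hrim M' (hM'.maximal_of_ncard_eq hcard')).2 v hvI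
  rcases hg with rfl | ⟨hgM, hguv⟩
  · rcases Sym2.mem_iff.1 hvg with h | h
    exacts [(G.ne_of_adj (hM.1 huv)) h.symm, hxv h.symm]
  · exact hguv (hM.eq_of_mem hgM huv hvg (Sym2.mem_mk_right u v))

theorem RandomlyInternallyMatchable.charge_eq_zero_of_charge_eq_two {M : Set (Sym2 V)}
    (hM : G.IsMatchingSet M) (hcard : M.ncard = G.matchingNumber) {u v : V}
    (huv : s(u, v) ∈ M) (hu : G.charge u = 2) : G.charge v = 0 := by
  obtain ⟨huI, x, hux, hx⟩ := charge_eq_two hu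
  have hvI : ¬ G.IsInternal v := by
    by_cases hxv : x = v
    · exact hxv ▸ hx
    · exact hrim.not_isInternal_of_exchange hM hcard huv hux hx hxv
  have hvu : G.Adj v u := (G.mem_edgeSet.1 (hM.1 huv)).symm
  have hv_leaf_nbr : ¬ ∃ y, G.Adj v y ∧ ¬ G.IsInternal y := fun ⟨y, hvy, hy⟩ =>
    hy ((adj_iff_eq_of_not_isInternal hvu hvI).1 hvy ▸ huI)
  simp [charge, hvI, hv_leaf_nbr]

theorem RandomlyInternallyMatchable.charge_add_charge_le_two {M : Set (Sym2 V)}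
    (hM : G.IsMatchingSet M) (hcard : M.ncard = G.matchingNumber) {u v : V}
    (huv : s(u, v) ∈ M) : G.charge u + G.charge v ≤ 2 := by
  by_cases hu : G.charge u = 2
  · simp [hu, hrim.charge_eq_zero_of_charge_eq_two hM hcard huv hu]
  by_cases hv : G.charge v = 2
  · simp [hv, hrim.charge_eq_zero_of_charge_eq_two hM hcard (Sym2.eq_swap ▸ huv) hv]
  have := charge_le_two (G := G) u
  have := charge_le_two (G := G) v
  omega

end Finite

theorem RandomlyInternallyMatchable.sum_charge_le [Fintype V]
    (hrim : G.RandomlyInternallyMatchable) :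
    ∑ v, G.charge v ≤ 2 * G.matchingNumber := by
  classical
  obtain ⟨M, hM, hcard⟩ := exists_isMatchingSet_ncard_eq_matchingNumber (G := G)
  have hsat (v : V) : G.charge v ≤ ∑ m ∈ M.toFinset with v ∈ m, G.charge v := by
    rcases Nat.eq_zero_or_pos (G.charge v) with hv | hv
    · exact hv.symm ▸ Nat.zero_le _
    obtain ⟨m, hm, hvm⟩ := hrim.saturatedBy_of_charge_pos (hM.maximal_of_ncard_eq hcard) hv
    exact Finset.single_le_sum (f := fun _ => G.charge v) (fun _ _ => Nat.zero_le _)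
      (Finset.mem_filter.2 ⟨Set.mem_toFinset.2 hm, hvm⟩)
  have hedge : ∀ m ∈ M.toFinset, ∑ v ∈ m.toFinset, G.charge v ≤ 2 := by
    intro m hm
    rw [Set.mem_toFinset] at hm
    induction m using Sym2.ind with
    | _ a b =>
      rw [Sym2.toFinset_mk_eq, Finset.sum_pair (G.ne_of_adj (hM.1 hm))]
      exact hrim.charge_add_charge_le_two hM hcard hm
  calc ∑ v, G.charge v ≤ ∑ v, ∑ m ∈ M.toFinset with v ∈ m, G.charge v := Finset.sum_le_sum
        fun v _ => hsat v
    _ = ∑ m ∈ M.toFinset, ∑ v ∈ m.toFinset, G.charge v := Finset.sum_comm' (by simp [and_comm])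
    _ ≤ ∑ _m ∈ M.toFinset, 2 := Finset.sum_le_sum hedge
    _ = 2 * G.matchingNumber := by
      rw [Finset.sum_const, smul_eq_mul, ← Set.ncard_eq_toFinset_card', hcard, mul_comm]

end SimpleGraph

theorem stmt_12_general {V : Type*} [Fintype V] [DecidableEq V] (H : SimpleGraph V)
    [DecidableRel H.Adj] (hrim : H.RandomlyInternallyMatchable)
    (w : Sym2 V → ℕ) :
    ∑ e ∈ H.edgeFinset, w e ≤
      (Finset.univ.sup fun v : V => ∑ e ∈ H.incidenceFinset v, w e) * H.matchingNumber := by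
  set Δ := Finset.univ.sup fun v : V => ∑ e ∈ H.incidenceFinset v, w e
  have hdouble : 2 * ∑ e ∈ H.edgeFinset, w e ≤ 2 * (Δ * H.matchingNumber) :=
    calc 2 * ∑ e ∈ H.edgeFinset, w e = ∑ e ∈ H.edgeFinset, w e * 2 := by
          rw [← Finset.sum_mul, mul_comm]
      _ ≤ ∑ e ∈ H.edgeFinset, w e * ∑ v ∈ e.toFinset, H.charge v :=
          Finset.sum_le_sum fun e he =>
            Nat.mul_le_mul_left _ (two_le_sum_charge_of_mem_edgeSet (H.mem_edgeFinset.1 he))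
      _ = ∑ v, H.charge v * ∑ e ∈ H.incidenceFinset v, w e :=
          (sum_mul_sum_incidenceFinset _ _).symm
      _ ≤ ∑ v, H.charge v * Δ := Finset.sum_le_sum fun v _ =>
          Nat.mul_le_mul_left _ (Finset.le_sup (f := fun v => ∑ e ∈ H.incidenceFinset v, w e)
            (Finset.mem_univ v))
      _ = (∑ v, H.charge v) * Δ := (Finset.sum_mul _ _ _).symm
      _ ≤ 2 * H.matchingNumber * Δ := Nat.mul_le_mul_right _ hrim.sum_charge_le
      _ = 2 * (Δ * H.matchingNumber) := by ring
  omega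

/-- For a finite connected randomly internally matchable graph `H` with
positive integer edge weights `w`, the total edge weight is at most `Δ_w(H) · ν(H)`. -/
theorem stmt_12 {V : Type*} [Fintype V] [DecidableEq V] (H : SimpleGraph V)
    [DecidableRel H.Adj] (hconn : H.Connected) (hrim : H.RandomlyInternallyMatchable)
    (w : Sym2 V → ℕ) (hw : ∀ e ∈ H.edgeSet, 1 ≤ w e) :
    ∑ e ∈ H.edgeFinset, w e ≤
      (Finset.univ.sup fun v : V => ∑ e ∈ H.incidenceFinset v, w e) * H.matchingNumber :=
  stmt_12_general H hrim w
end

section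
/- Let H be a finite connected triangle-free simple graph with at least one edge and let G = L(H) be its line graph. If G is CIS, then |V(G)| ≤ α(G) · ω(G), where α(G) is the stability number and ω(G) is the clique number of G. -/
open SimpleGraph

/-!
Write `Δ` for the maximum degree of `H`. Stars of `H` are cliques of `L(H)` and matchings of `H`
are stable sets of `L(H)`, so `Δ ≤ ω` and `|M| ≤ α` for every matching `M`; it remains to find a
matching with `|E(H)| ≤ |M| Δ`.

Since `H` is triangle-free, the star at a vertex of degree at least two is a maximal clique of
`L(H)`, and a maximal matching is a maximal stable set, so by CIS every maximal matching covers all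
non-leaves. Choose one, `M`, that moreover matches every vertex with a pendant neighbour to a leaf.
Then `coverWeight` is a doubled fractional vertex cover `t` of `H` whose weights sum to at most `2`
on each edge of `M` and vanish off the vertices of `M`, and double counting over darts gives
`2 |E(H)| ≤ ∑ t(v) deg(v) ≤ Δ ∑ t(v) ≤ 2 Δ |M|`.
-/

open Finset

namespace SimpleGraph

variable {V : Type*}

section WeightedDegreeSum

variable [Fintype V] (G : SimpleGraph V) [DecidableRel G.Adj] (t : V → ℕ)

theorem sum_mul_degree_eq_sum_dart : ∑ v, t v * G.degree v = ∑ d : G.Dart, t d.fst := by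
  classical
  rw [← sum_fiberwise univ (fun d : G.Dart ↦ d.fst) (fun d ↦ t d.fst)]
  refine sum_congr rfl fun v _ ↦ ?_
  rw [sum_congr rfl fun d hd ↦ by rw [(mem_filter.1 hd).2], sum_const, smul_eq_mul, mul_comm]
  congr 1
  exact (G.dart_fst_fiber_card_eq_degree v).symm

theorem two_mul_sum_mul_degree :
    2 * ∑ v, t v * G.degree v = ∑ d : G.Dart, (t d.fst + t d.snd) := by
  have hsymm : ∑ d : G.Dart, t d.snd = ∑ d : G.Dart, t d.fst :=
    Equiv.sum_comp (Dart.symm_involutive.toPerm _) fun d : G.Dart ↦ t d.fst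
  rw [sum_add_distrib, hsymm, sum_mul_degree_eq_sum_dart, two_mul]

theorem two_mul_card_edgeFinset_le_sum_mul_degree (ht : ∀ u v, G.Adj u v → 2 ≤ t u + t v) :
    2 * #G.edgeFinset ≤ ∑ v, t v * G.degree v := by
  have h : ∑ _d : G.Dart, 2 ≤ ∑ d : G.Dart, (t d.fst + t d.snd) :=
    sum_le_sum fun d _ ↦ ht _ _ d.adj
  rw [← two_mul_sum_mul_degree, sum_const, card_univ, dart_card_eq_twice_card_edges,
    smul_eq_mul] at h
  omega

theorem sum_mul_degree_le_two_mul_card_edgeFinset (ht : ∀ u v, G.Adj u v → t u + t v ≤ 2) :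
    ∑ v, t v * G.degree v ≤ 2 * #G.edgeFinset := by
  have h : ∑ d : G.Dart, (t d.fst + t d.snd) ≤ ∑ _d : G.Dart, 2 :=
    sum_le_sum fun d _ ↦ ht _ _ d.adj
  rw [← two_mul_sum_mul_degree, sum_const, card_univ, dart_card_eq_twice_card_edges,
    smul_eq_mul] at h
  omega

end WeightedDegreeSum

theorem IsClique.ncard_le_cliqueNumber [Finite V] {G : SimpleGraph V} {C : Set V}
    (hC : G.IsClique C) : C.ncard ≤ G.cliqueNumber :=
  le_csSup ⟨Nat.card V, by rintro _ ⟨D, -, rfl⟩; exact Set.ncard_le_card D⟩ ⟨C, hC, rfl⟩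

theorem IsStableSet.ncard_le_stabilityNumber [Finite V] {G : SimpleGraph V} {S : Set V}
    (hS : G.IsStableSet S) : S.ncard ≤ G.stabilityNumber :=
  le_csSup ⟨Nat.card V, by rintro _ ⟨T, -, rfl⟩; exact Set.ncard_le_card T⟩ ⟨S, hS, rfl⟩

theorem ncard_neighborSet_eq_degree (G : SimpleGraph V) (v : V) [Fintype (G.neighborSet v)] :
    (G.neighborSet v).ncard = G.degree v := by
  rw [← Nat.card_coe_set_eq, Nat.card_eq_fintype_card, card_neighborSet_eq_degree]

theorem eq_of_adj_of_degree_le_one {G : SimpleGraph V} {v a b : V} [Fintype (G.neighborSet v)]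
    (hv : G.degree v ≤ 1) (ha : G.Adj v a) (hb : G.Adj v b) : a = b :=
  card_le_one.1 hv a ((G.mem_neighborFinset v a).2 ha) b ((G.mem_neighborFinset v b).2 hb)

section Matching

variable {G H : SimpleGraph V} {M : Set (Sym2 V)} {e : Sym2 V}

theorem IsMatchingSet.mono (hGH : G ≤ H) (hM : G.IsMatchingSet M) : H.IsMatchingSet M :=
  ⟨hM.1.trans (edgeSet_mono hGH), hM.2⟩

theorem IsMatchingSet.insert (hM : G.IsMatchingSet M) (he : e ∈ G.edgeSet)
    (hdisj : ∀ f ∈ M, f ≠ e → ∀ v ∈ e, v ∉ f) : G.IsMatchingSet (insert e M) := by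
  refine ⟨Set.insert_subset he hM.1, ?_⟩
  rintro f (rfl | hf) g (rfl | hg) hfg v ⟨hvf, hvg⟩
  · exact hfg rfl
  · exact hdisj g hg hfg.symm v hvf hvg
  · exact hdisj f hf hfg v hvg hvf
  · exact hM.2 f hf g hg hfg v ⟨hvf, hvg⟩

theorem exists_mem_mem_of_maximal_isMatchingSet (hM : Maximal G.IsMatchingSet M)
    (he : e ∈ G.edgeSet) : ∃ f ∈ M, ∃ v ∈ e, v ∈ f := by
  by_contra! hdisj
  have heM : e ∈ M := hM.mem_of_prop_insert (hM.1.insert he fun f hf _ ↦ hdisj f hf)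
  induction e using Sym2.ind with
  | _ a b => exact hdisj _ heM a (Sym2.mem_mk_left a b) (Sym2.mem_mk_left a b)

theorem IsMatchingSet.isStableSet_lineGraph (hM : H.IsMatchingSet M) :
    H.lineGraph.IsStableSet (Subtype.val ⁻¹' M) := by
  intro e he f hf hef hadj
  obtain ⟨-, v, hve, hvf⟩ := lineGraph_adj_iff_exists.1 hadj
  exact hM.2 e he f hf (Subtype.val_injective.ne hef) v ⟨hve, hvf⟩

theorem maximal_isStableSet_lineGraph (hM : Maximal H.IsMatchingSet M) :
    Maximal H.lineGraph.IsStableSet (Subtype.val ⁻¹' M) := by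
  refine ⟨hM.1.isStableSet_lineGraph, fun S hS hMS f hf ↦ ?_⟩
  obtain ⟨g, hg, v, hvf, hvg⟩ := exists_mem_mem_of_maximal_isMatchingSet hM f.2
  by_contra hfM
  have hfg : f ≠ ⟨g, hM.1.1 hg⟩ := fun h ↦ hfM (h ▸ hg)
  exact hS hf (hMS hg) hfg (lineGraph_adj_iff_exists.2 ⟨hfg, v, hvf, hvg⟩)

theorem IsMatchingSet.ncard_le_stabilityNumber_lineGraph [Finite V] (hM : H.IsMatchingSet M) :
    M.ncard ≤ H.lineGraph.stabilityNumber := by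
  have : Finite (Sym2 V) := Finite.of_surjective _ Sym2.mk_surjective
  rw [← Set.ncard_preimage_of_injective_subset_range (f := (Subtype.val : H.edgeSet → Sym2 V))
    Subtype.val_injective (by rw [Subtype.range_coe]; exact hM.1)]
  exact hM.isStableSet_lineGraph.ncard_le_stabilityNumber

end Matching

section LineGraph

theorem isClique_lineGraph_incidenceSet (H : SimpleGraph V) (v : V) :
    H.lineGraph.IsClique (Subtype.val ⁻¹' H.incidenceSet v) :=
  fun _ he _ hf hef ↦ lineGraph_adj_iff_exists.2 ⟨hef, v, he.2, hf.2⟩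

theorem degree_le_cliqueNumber_lineGraph [Fintype V] (H : SimpleGraph V) [DecidableRel H.Adj]
    (v : V) : H.degree v ≤ H.lineGraph.cliqueNumber := by
  classical
  have hcard : (Subtype.val ⁻¹' H.incidenceSet v : Set H.edgeSet).ncard = H.degree v := by
    rw [Set.ncard_preimage_of_injective_subset_range (f := (Subtype.val : H.edgeSet → Sym2 V))
      Subtype.val_injective (by rw [Subtype.range_coe]; exact H.incidenceSet_subset v),
      ← Nat.card_coe_set_eq, Nat.card_eq_fintype_card, card_incidenceSet_eq_degree]
  exact hcard ▸ (isClique_lineGraph_incidenceSet H v).ncard_le_cliqueNumber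

theorem maxDegree_le_cliqueNumber_lineGraph [Fintype V] (H : SimpleGraph V) [DecidableRel H.Adj] :
    H.maxDegree ≤ H.lineGraph.cliqueNumber :=
  maxDegree_le_of_forall_degree_le _ _ (degree_le_cliqueNumber_lineGraph H)

theorem maximal_isClique_lineGraph_incidenceSet {H : SimpleGraph V} (htri : H.CliqueFree 3) {v : V}
    [Fintype (H.neighborSet v)] (hv : 2 ≤ H.degree v) :
    Maximal H.lineGraph.IsClique (Subtype.val ⁻¹' H.incidenceSet v) := by
  classical
  refine ⟨isClique_lineGraph_incidenceSet H v, fun C hC hsub f hf ↦ ?_⟩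
  by_contra hvf
  -- an edge meeting two edges of the star away from `v` would close a triangle
  have hmem : ∀ c, H.Adj v c → c ∈ (f : Sym2 V) := by
    intro c hc
    have hstar : (⟨s(v, c), hc⟩ : H.edgeSet) ∈ Subtype.val ⁻¹' H.incidenceSet v :=
      ⟨hc, Sym2.mem_mk_left v c⟩
    have hne : f ≠ ⟨s(v, c), hc⟩ := fun h ↦ hvf (h ▸ hstar)
    obtain ⟨-, z, hzf, hz⟩ := lineGraph_adj_iff_exists.1 (hC hf (hsub hstar) hne)
    rcases Sym2.mem_iff.1 hz with rfl | rfl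
    · exact absurd ⟨f.2, hzf⟩ hvf
    · exact hzf
  obtain ⟨a, ha, b, hb, hab⟩ := one_lt_card.1 hv
  rw [mem_neighborFinset] at ha hb
  have hfab : (f : Sym2 V) = s(a, b) := (Sym2.mem_and_mem_iff hab).1 ⟨hmem a ha, hmem b hb⟩
  exact htri {v, a, b} (is3Clique_triple_iff.2 ⟨ha, hb, H.mem_edgeSet.1 (hfab ▸ f.2)⟩)

theorem randomlyInternallyMatchable_of_isCIS_lineGraph {H : SimpleGraph V} (htri : H.CliqueFree 3)
    (hcis : H.lineGraph.IsCIS) : H.RandomlyInternallyMatchable := by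
  intro M hM
  refine ⟨hM.1, fun v hv ↦ ?_⟩
  have : Fintype (H.neighborSet v) := (Set.finite_of_ncard_pos (by omega)).fintype
  have hdeg : 2 ≤ H.degree v := by
    rwa [← ncard_neighborSet_eq_degree]
  obtain ⟨e, hev, heM⟩ := hcis _ _ (maximal_isClique_lineGraph_incidenceSet htri hdeg)
    (maximal_isStableSet_lineGraph hM)
  exact ⟨e, heM, hev.2⟩

end LineGraph

section PendantEdges

variable [Fintype V] (H : SimpleGraph V) [DecidableRel H.Adj] {M : Set (Sym2 V)} {u v : V}

def pendantEdgeGraph : SimpleGraph V where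
  Adj a b := H.Adj a b ∧ (H.degree a ≤ 1 ∨ H.degree b ≤ 1)
  symm := ⟨fun _ _ h ↦ ⟨h.1.symm, h.2.symm⟩⟩
  loopless := ⟨fun _ h ↦ h.1.ne rfl⟩

def MatchesLeaves (M : Set (Sym2 V)) : Prop :=
  ∀ u v, H.Adj u v → H.degree v ≤ 1 → ∃ w, H.degree w ≤ 1 ∧ s(u, w) ∈ M

-- Extend a maximal matching of the pendant edges to a maximal matching of `H`.
theorem exists_maximal_isMatchingSet_matchesLeaves :
    ∃ M, Maximal H.IsMatchingSet M ∧ H.MatchesLeaves M := by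
  obtain ⟨M₀, -, hM₀⟩ := Finite.exists_le_maximal (p := H.pendantEdgeGraph.IsMatchingSet)
    (a := ∅) ⟨Set.empty_subset _, by simp⟩
  obtain ⟨M, hM₀M, hM⟩ := Finite.exists_le_maximal (p := H.IsMatchingSet)
    (hM₀.1.mono fun _ _ (h : H.pendantEdgeGraph.Adj _ _) ↦ h.1)
  refine ⟨M, hM, fun u v huv hv ↦ ?_⟩
  obtain ⟨f, hf, z, hz, hzf⟩ := exists_mem_mem_of_maximal_isMatchingSet hM₀
    (e := s(u, v)) ⟨huv, Or.inr hv⟩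
  obtain ⟨x, rfl⟩ := Sym2.mem_iff_exists.1 hzf
  have hzx : H.pendantEdgeGraph.Adj z x := hM₀.1.1 hf
  rcases Sym2.mem_iff.1 hz with rfl | rfl
  · refine ⟨x, ?_, hM₀M hf⟩
    rcases hzx.2 with hz | hx
    · rwa [eq_of_adj_of_degree_le_one hz hzx.1 huv]
    · exact hx
  · obtain rfl := eq_of_adj_of_degree_le_one hv hzx.1 huv.symm
    exact ⟨z, hv, Sym2.eq_swap ▸ hM₀M hf⟩

-- Twice a half-integral fractional vertex cover: weight `1` on a non-leaf with a pendant
-- neighbour, `1/2` on other non-leaves and on the ends of an isolated edge, `0` elsewhere.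
def coverWeight (v : V) : ℕ :=
  (if ∃ u, H.Adj v u ∧ H.degree u ≤ 1 then 1 else 0) + if 2 ≤ H.degree v then 1 else 0

variable {H}

theorem coverWeight_eq_of_adj (huv : H.Adj u v) (hv : H.degree v ≤ 1) :
    H.coverWeight u = 1 + if 2 ≤ H.degree u then 1 else 0 := by
  rw [coverWeight, if_pos ⟨v, huv, hv⟩]

theorem one_le_coverWeight_of_two_le_degree (hv : 2 ≤ H.degree v) : 1 ≤ H.coverWeight v := by
  rw [coverWeight, if_pos hv]
  exact Nat.le_add_left 1 _

theorem two_le_coverWeight_add (huv : H.Adj u v) : 2 ≤ H.coverWeight u + H.coverWeight v := by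
  have leaf_or_two_le (x : V) : H.degree x ≤ 1 ∨ 2 ≤ H.degree x := by omega
  rcases leaf_or_two_le u with hu | hu <;> rcases leaf_or_two_le v with hv | hv
  · rw [coverWeight_eq_of_adj huv hv, coverWeight_eq_of_adj huv.symm hu]
    omega
  · rw [coverWeight_eq_of_adj huv.symm hu, if_pos hv]
    omega
  · rw [coverWeight_eq_of_adj huv hv, if_pos hu]
    omega
  · linarith [one_le_coverWeight_of_two_le_degree hu, one_le_coverWeight_of_two_le_degree hv]

theorem coverWeight_le_two (v : V) : H.coverWeight v ≤ 2 := by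
  unfold coverWeight
  split_ifs <;> omega

theorem coverWeight_eq_zero_of_mem (hM : H.IsMatchingSet M) (hleaf : H.MatchesLeaves M)
    (huv : s(u, v) ∈ M) (hu : 2 ≤ H.degree u) (hl : ∃ w, H.Adj u w ∧ H.degree w ≤ 1) :
    H.coverWeight v = 0 := by
  obtain ⟨x, hux, hx⟩ := hl
  obtain ⟨w, hw, huw⟩ := hleaf u x hux hx
  obtain rfl : v = w := by
    by_contra hvw
    exact hM.2 _ huv _ huw (hvw ∘ Sym2.congr_right.1) u
      ⟨Sym2.mem_mk_left u v, Sym2.mem_mk_left u w⟩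
  have hnoLeaf : ¬∃ y, H.Adj v y ∧ H.degree y ≤ 1 := by
    rintro ⟨y, hvy, hy⟩
    rw [eq_of_adj_of_degree_le_one hw hvy (H.mem_edgeSet.1 (hM.1 huv)).symm] at hy
    omega
  rw [coverWeight, if_neg hnoLeaf, if_neg (by omega)]

theorem coverWeight_add_le_two (hM : H.IsMatchingSet M) (hleaf : H.MatchesLeaves M)
    (huv : s(u, v) ∈ M) : H.coverWeight u + H.coverWeight v ≤ 2 := by
  have hle (x : V) :
      H.coverWeight x ≤ 1 ∨ 2 ≤ H.degree x ∧ ∃ w, H.Adj x w ∧ H.degree w ≤ 1 := by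
    unfold coverWeight
    split_ifs <;> simp_all
  rcases hle u with hu | hu
  · rcases hle v with hv | hv
    · omega
    · rw [Sym2.eq_swap] at huv
      linarith [coverWeight_eq_zero_of_mem hM hleaf huv hv.1 hv.2, H.coverWeight_le_two v]
  · linarith [coverWeight_eq_zero_of_mem hM hleaf huv hu.1 hu.2, H.coverWeight_le_two u]

theorem exists_mem_of_coverWeight_ne_zero (hM : H.IsPerfectInternalMatching M)
    (hleaf : H.MatchesLeaves M) (hv : H.coverWeight v ≠ 0) : ∃ e ∈ M, v ∈ e := by
  by_cases hl : ∃ u, H.Adj v u ∧ H.degree u ≤ 1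
  · obtain ⟨u, hvu, hu⟩ := hl
    obtain ⟨w, -, hw⟩ := hleaf v u hvu hu
    exact ⟨_, hw, Sym2.mem_mk_left v w⟩
  · have hd : 2 ≤ H.degree v := by
      by_contra hd
      exact hv (by rw [coverWeight, if_neg hl, if_neg hd])
    exact hM.2 v ((ncard_neighborSet_eq_degree H v).symm ▸ hd)

theorem card_edgeFinset_le_ncard_mul_maxDegree (hM : H.IsPerfectInternalMatching M)
    (hleaf : H.MatchesLeaves M) : #H.edgeFinset ≤ M.ncard * H.maxDegree := by
  classical
  let t := H.coverWeight
  let HM := fromEdgeSet M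
  have hcover : 2 * #H.edgeFinset ≤ ∑ v, t v * H.degree v :=
    H.two_mul_card_edgeFinset_le_sum_mul_degree t fun _ _ ↦ two_le_coverWeight_add
  have hpacking : ∑ v, t v * HM.degree v ≤ 2 * M.ncard := by
    have hHM : HM.edgeSet = M :=
      (edgeSet_fromEdgeSet M).trans <| sdiff_eq_left.2 <| Set.disjoint_left.2
        fun _ he hd ↦ H.not_isDiag_of_mem_edgeSet (hM.1.1 he) hd
    have := HM.sum_mul_degree_le_two_mul_card_edgeFinset t fun _ _ huv ↦
      coverWeight_add_le_two hM.1 hleaf ((fromEdgeSet_adj M).1 huv).1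
    rwa [← Set.ncard_coe_finset, coe_edgeFinset, hHM] at this
  have hsupport : ∑ v, t v ≤ ∑ v, t v * HM.degree v := by
    refine sum_le_sum fun v _ ↦ ?_
    rcases eq_or_ne (t v) 0 with h | h
    · simp [h]
    obtain ⟨e, he, hve⟩ := exists_mem_of_coverWeight_ne_zero hM hleaf h
    obtain ⟨w, rfl⟩ := Sym2.mem_iff_exists.1 hve
    exact Nat.le_mul_of_pos_right _
      ((HM.degree_pos_iff_exists_adj v).2 ⟨w, (fromEdgeSet_adj M).2 ⟨he, (hM.1.1 he).ne⟩⟩)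
  have hdeg : ∑ v, t v * H.degree v ≤ (∑ v, t v) * H.maxDegree := by
    rw [sum_mul]
    exact sum_le_sum fun v _ ↦ Nat.mul_le_mul_left _ (H.degree_le_maxDegree v)
  have : 2 * #H.edgeFinset ≤ 2 * (M.ncard * H.maxDegree) := calc
    2 * #H.edgeFinset ≤ (∑ v, t v) * H.maxDegree := hcover.trans hdeg
    _ ≤ 2 * M.ncard * H.maxDegree :=
      Nat.mul_le_mul_right _ (hsupport.trans hpacking)
    _ = 2 * (M.ncard * H.maxDegree) := mul_assoc _ _ _
  omega

end PendantEdges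

end SimpleGraph

theorem stmt_13_general {V : Type*} [Fintype V] (H : SimpleGraph V)
    (htri : H.CliqueFree 3) (hcis : H.lineGraph.IsCIS) :
    Nat.card H.edgeSet ≤ H.lineGraph.stabilityNumber * H.lineGraph.cliqueNumber := by
  classical
  obtain ⟨M, hM, hleaf⟩ := H.exists_maximal_isMatchingSet_matchesLeaves
  calc Nat.card H.edgeSet = #H.edgeFinset := by rw [Nat.card_eq_fintype_card, edgeFinset_card]
    _ ≤ M.ncard * H.maxDegree := card_edgeFinset_le_ncard_mul_maxDegree
        (randomlyInternallyMatchable_of_isCIS_lineGraph htri hcis M hM) hleaf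
    _ ≤ _ := Nat.mul_le_mul hM.1.ncard_le_stabilityNumber_lineGraph
        (maxDegree_le_cliqueNumber_lineGraph H)

/-- If `H` is a finite connected triangle-free graph with at least one edge
and `G = L(H)` is CIS, then `|V(G)| ≤ α(G) · ω(G)`. -/
theorem stmt_13 {V : Type*} [Fintype V] (H : SimpleGraph V)
    (hconn : H.Connected) (htri : H.CliqueFree 3) (hedge : H.edgeSet.Nonempty)
    (hcis : H.lineGraph.IsCIS) :
    Nat.card H.edgeSet ≤ H.lineGraph.stabilityNumber * H.lineGraph.cliqueNumber :=
  stmt_13_general H htri hcis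
end
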